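/- arXiv:2411.04977 — 3 statements merged into one kernel-verified Lean document; each statement's English description precedes it below -/
import Mathlib

section
/- Fix d, d' ≥ 1 and p ∈ [0,1]. Let O be a linear, trace-preserving map from d×d complex matrices to d'×d' complex matrices (Tr O(ρ) = Tr ρ for all ρ). Define the map Õ from (d+1)×(d+1) matrices to (d'+1)×(d'+1) matrices by Õ(σ) = V' O(V†σV) V'† + σ_{e,e}·|e'⟩⟨e'|, where V and V' are the inclusion isometries ℂ^d → ℂ^{d+1} and ℂ^{d'} → ℂ^{d'+1}, |e⟩ and |e'⟩ are the respective erasure-flag basis vectors, and σ_{e,e} = ⟨e|σ|e⟩. Then the erasure channels satisfy the intertwining relation E_p^{(d')} ∘ O = Õ ∘ E_p^{(d)}, i.e. E_p^{(d')}(O(ρ)) = Õ(E_p^{(d)}(ρ)) for all d×d matrices ρ. -/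
open Matrix

/-- The inclusion isometry `ℂ^d → ℂ^(d+1)`. -/
noncomputable def inclV (d : ℕ) : Matrix (Fin (d + 1)) (Fin d) ℂ :=
  Matrix.of fun i j => if (i : ℕ) = (j : ℕ) then 1 else 0

/-- The projection `|e⟩⟨e|` onto the erasure flag (the `(d+1)`-st basis vector). -/
noncomputable def eraseFlag (d : ℕ) : Matrix (Fin (d + 1)) (Fin (d + 1)) ℂ :=
  Matrix.single (Fin.last d) (Fin.last d) 1

/-- The qudit erasure channel `E_p(ρ) = (1-p)·VρV† + p·Tr(ρ)·|e⟩⟨e|`. -/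
noncomputable def erase (d : ℕ) (p : ℝ) (ρ : Matrix (Fin d) (Fin d) ℂ) :
    Matrix (Fin (d + 1)) (Fin (d + 1)) ℂ :=
  ((1 - p : ℝ) : ℂ) • (inclV d * ρ * (inclV d)ᴴ) + ((p : ℂ) * ρ.trace) • eraseFlag d


lemma inclV_eq (d : ℕ) (i : Fin (d+1)) (j : Fin d) :
    inclV d i j = if i = j.castSucc then 1 else 0 := by
  simp [inclV, Fin.ext_iff, Fin.coe_castSucc, eq_comm]

lemma hVV (d : ℕ) : (inclV d)ᴴ * inclV d = 1 := by
  ext j k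
  simp [Matrix.mul_apply, Matrix.conjTranspose_apply, inclV_eq, apply_ite,
    Finset.sum_ite_eq, Matrix.one_apply, Fin.castSucc_inj, eq_comm]

lemma inclV_last (d : ℕ) (j : Fin d) : inclV d (Fin.last d) j = 0 := by
  simp [inclV_eq, Fin.ext_iff, Fin.val_last]
  omega

lemma hVflagV (d : ℕ) : (inclV d)ᴴ * eraseFlag d * inclV d = 0 := by
  ext j k
  simp [Matrix.mul_apply, Matrix.conjTranspose_apply, eraseFlag,
    Matrix.single, inclV_last, Matrix.of_apply, ite_and, Finset.sum_ite_eq, inclV_last]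

lemma hVrhoV_last (d : ℕ) (ρ : Matrix (Fin d) (Fin d) ℂ) :
    (inclV d * ρ * (inclV d)ᴴ) (Fin.last d) (Fin.last d) = 0 := by
  simp [Matrix.mul_apply, inclV_last]

/-- Intertwining relation for erasure channels: for any linear trace-preserving map `O`,
`E_p ∘ O = Õ ∘ E_p`, where `Õ(σ) = V' O(V†σV) V'† + σ_{e,e}·|e'⟩⟨e'|` is the flag-controlled
version of `O` acting after the erasure channel. -/
theorem erasure_intertwine {d d' : ℕ} (hd : 1 ≤ d) (hd' : 1 ≤ d')
    (p : ℝ) (hp : p ∈ Set.Icc (0 : ℝ) 1)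
    (O : Matrix (Fin d) (Fin d) ℂ →ₗ[ℂ] Matrix (Fin d') (Fin d') ℂ)
    (hO : ∀ ρ, (O ρ).trace = ρ.trace)
    (ρ : Matrix (Fin d) (Fin d) ℂ) :
    erase d' p (O ρ)
      = inclV d' * O ((inclV d)ᴴ * erase d p ρ * inclV d) * (inclV d')ᴴ
        + (erase d p ρ (Fin.last d) (Fin.last d)) • eraseFlag d' := by
  have h1 : (inclV d)ᴴ * erase d p ρ * inclV d = ((1 - p : ℝ) : ℂ) • ρ := by
    simp only [erase, Matrix.mul_add, Matrix.add_mul, Matrix.mul_smul, Matrix.smul_mul]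
    rw [show (inclV d)ᴴ * (inclV d * ρ * (inclV d)ᴴ) * inclV d
        = ((inclV d)ᴴ * inclV d) * ρ * ((inclV d)ᴴ * inclV d) by simp only [Matrix.mul_assoc],
      hVV, show (inclV d)ᴴ * eraseFlag d * inclV d = 0 from hVflagV d]
    simp
  have h2 : erase d p ρ (Fin.last d) (Fin.last d) = p * ρ.trace := by
    simp [erase, hVrhoV_last, eraseFlag, Matrix.single]
  rw [h1, h2]
  rw [_root_.map_smul]
  simp only [Matrix.mul_smul, Matrix.smul_mul, erase, hO]
end

section
/- Fix γ₁, γ₂ ∈ [0,1]. Let ψ₂ = |w⟩⟨w| be the 16×16 rank-one matrix with |w⟩ = (|0101⟩ + |1010⟩)/√2, where the four qubit indices are ordered (receiver 1 rail 1, receiver 1 rail 2, receiver 2 rail 1, receiver 2 rail 2). Apply the amplitude damping channel A_{γ₁} independently to each of the first two qubits and A_{γ₂} independently to each of the last two qubits. Then the output equals (1-γ₁)(1-γ₂)·ψ₂ + (γ₁(1-γ₂)/2)·(|0001⟩⟨0001| + |0010⟩⟨0010|) + ((1-γ₁)γ₂/2)·(|0100⟩⟨0100| + |1000⟩⟨1000|)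 + γ₁γ₂·|0000⟩⟨0000|. -/
open Matrix Kronecker

/-- Kraus operators of the amplitude damping channel `A_γ`:
`K₁ = |0⟩⟨0| + √(1-γ)|1⟩⟨1|` and `K₂ = √γ·|0⟩⟨1|`. -/
noncomputable def adKraus (γ : ℝ) : Fin 2 → Matrix (Fin 2) (Fin 2) ℂ := fun i =>
  if i = 0 then !![1, 0; 0, ((Real.sqrt (1 - γ) : ℝ) : ℂ)]
  else !![0, ((Real.sqrt γ : ℝ) : ℂ); 0, 0]

/-- The computational basis vector `|abcd⟩` on four qubits, grouped as
(receiver 1's two rails) × (receiver 2's two rails). -/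
noncomputable def ket4 (a b c d : Fin 2) : (Fin 2 × Fin 2) × (Fin 2 × Fin 2) → ℂ :=
  fun x => if x = ((a, b), (c, d)) then 1 else 0

/-- The projector `|abcd⟩⟨abcd|`. -/
noncomputable def proj4 (a b c d : Fin 2) :
    Matrix ((Fin 2 × Fin 2) × (Fin 2 × Fin 2)) ((Fin 2 × Fin 2) × (Fin 2 × Fin 2)) ℂ :=
  Matrix.vecMulVec (ket4 a b c d) (star (ket4 a b c d))

/-- The dual-rail state `|w⟩ = (|0101⟩ + |1010⟩)/√2`. -/
noncomputable def wVec : (Fin 2 × Fin 2) × (Fin 2 × Fin 2) → ℂ :=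
  ((Real.sqrt 2 : ℂ))⁻¹ • (ket4 0 1 0 1 + ket4 1 0 1 0)

/-- `ψ₂ = |w⟩⟨w|`. -/
noncomputable def psi2 :
    Matrix ((Fin 2 × Fin 2) × (Fin 2 × Fin 2)) ((Fin 2 × Fin 2) × (Fin 2 × Fin 2)) ℂ :=
  Matrix.vecMulVec wVec (star wVec)

lemma sandwich {n : Type*} [Fintype n] (M : Matrix n n ℂ) (u : n → ℂ) :
    M * vecMulVec u (star u) * Mᴴ = vecMulVec (M *ᵥ u) (star (M *ᵥ u)) := by
  ext i j
  simp only [mul_apply, vecMulVec_apply, mulVec, dotProduct, conjTranspose_apply,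
    Pi.star_apply, star_sum, star_mul', Finset.sum_mul, Finset.mul_sum]
  apply Finset.sum_congr rfl; intro k _
  apply Finset.sum_congr rfl; intro l _
  ring

lemma vmv_zero {n : Type*} (v : n → ℂ) : vecMulVec (0 : n → ℂ) v = 0 := by
  ext i j; simp [vecMulVec_apply]

lemma vmv_zero' {n : Type*} (v : n → ℂ) : vecMulVec v (0 : n → ℂ) = 0 := by
  ext i j; simp [vecMulVec_apply]

lemma vmv_smul {n : Type*} (c d : ℂ) (u v : n → ℂ) :
    vecMulVec (c • u) (d • v) = (c * d) • vecMulVec u v := by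
  ext i j; simp [vecMulVec_apply]; ring

lemma ket4_single (a b c d : Fin 2) : ket4 a b c d = Pi.single ((a,b),(c,d)) (1:ℂ) := by
  funext x; simp [ket4, Pi.single_apply]

set_option maxHeartbeats 1600000 in
/-- Explicit output of sending the dual-rail state `ψ₂` through `A_{γ₁}` on each of receiver
1's qubits and `A_{γ₂}` on each of receiver 2's qubits. -/
theorem dualRail_amplitudeDamping (γ₁ γ₂ : ℝ)
    (hγ₁ : γ₁ ∈ Set.Icc (0 : ℝ) 1) (hγ₂ : γ₂ ∈ Set.Icc (0 : ℝ) 1) :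
    (∑ i₁ : Fin 2, ∑ i₂ : Fin 2, ∑ i₃ : Fin 2, ∑ i₄ : Fin 2,
        ((adKraus γ₁ i₁ ⊗ₖ adKraus γ₁ i₂) ⊗ₖ (adKraus γ₂ i₃ ⊗ₖ adKraus γ₂ i₄)) * psi2 *
          ((adKraus γ₁ i₁ ⊗ₖ adKraus γ₁ i₂) ⊗ₖ (adKraus γ₂ i₃ ⊗ₖ adKraus γ₂ i₄))ᴴ)
      = (((1 - γ₁) * (1 - γ₂) : ℝ) : ℂ) • psi2
        + ((γ₁ * (1 - γ₂) / 2 : ℝ) : ℂ) • (proj4 0 0 0 1 + proj4 0 0 1 0)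
        + (((1 - γ₁) * γ₂ / 2 : ℝ) : ℂ) • (proj4 0 1 0 0 + proj4 1 0 0 0)
        + ((γ₁ * γ₂ : ℝ) : ℂ) • proj4 0 0 0 0 := by
  have key : ∀ i₁ i₂ i₃ i₄ : Fin 2,
      ((adKraus γ₁ i₁ ⊗ₖ adKraus γ₁ i₂) ⊗ₖ (adKraus γ₂ i₃ ⊗ₖ adKraus γ₂ i₄)) *ᵥ wVec =
      if (i₁,i₂,i₃,i₄) = (0,0,0,0) then
        ((Real.sqrt (1-γ₁) * Real.sqrt (1-γ₂) : ℝ) : ℂ) • wVec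
      else if (i₁,i₂,i₃,i₄) = (0,1,0,1) then
        (((Real.sqrt γ₁ * Real.sqrt γ₂ : ℝ) : ℂ) * ((Real.sqrt 2:ℝ):ℂ)⁻¹) • ket4 0 0 0 0
      else if (i₁,i₂,i₃,i₄) = (1,0,1,0) then
        (((Real.sqrt γ₁ * Real.sqrt γ₂ : ℝ) : ℂ) * ((Real.sqrt 2:ℝ):ℂ)⁻¹) • ket4 0 0 0 0
      else if (i₁,i₂,i₃,i₄) = (0,1,0,0) then
        (((Real.sqrt γ₁ * Real.sqrt (1-γ₂) : ℝ) : ℂ) * ((Real.sqrt 2:ℝ):ℂ)⁻¹) • ket4 0 0 0 1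
      else if (i₁,i₂,i₃,i₄) = (1,0,0,0) then
        (((Real.sqrt γ₁ * Real.sqrt (1-γ₂) : ℝ) : ℂ) * ((Real.sqrt 2:ℝ):ℂ)⁻¹) • ket4 0 0 1 0
      else if (i₁,i₂,i₃,i₄) = (0,0,0,1) then
        (((Real.sqrt (1-γ₁) * Real.sqrt γ₂ : ℝ) : ℂ) * ((Real.sqrt 2:ℝ):ℂ)⁻¹) • ket4 0 1 0 0
      else if (i₁,i₂,i₃,i₄) = (0,0,1,0) then
        (((Real.sqrt (1-γ₁) * Real.sqrt γ₂ : ℝ) : ℂ) * ((Real.sqrt 2:ℝ):ℂ)⁻¹) • ket4 1 0 0 0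
      else 0 := by
    have n1 : ((1,1) : Fin 2 × Fin 2) ≠ (0,0) := by decide
    have n2 : ((1,1) : Fin 2 × Fin 2) ≠ (0,1) := by decide
    have n3 : ((1,1) : Fin 2 × Fin 2) ≠ (1,0) := by decide
    have n4 : ((0,0) : Fin 2 × Fin 2) ≠ (0,1) := by decide
    have n5 : ((0,0) : Fin 2 × Fin 2) ≠ (1,0) := by decide
    intro i₁ i₂ i₃ i₄
    simp only [wVec, ket4_single, smul_add, mulVec_smul, mulVec_add, mulVec_single, mul_one]
    fin_cases i₁ <;> fin_cases i₂ <;> fin_cases i₃ <;> fin_cases i₄ <;>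
      · funext x
        obtain ⟨⟨p,q⟩,⟨r,s⟩⟩ := x
        fin_cases p <;> fin_cases q <;> fin_cases r <;> fin_cases s <;>
          simp [ket4, adKraus, kroneckerMap_apply, Complex.ofReal_mul, Prod.mk.injEq,
            n1, n2, n3, n4, n5, -Prod.mk_zero_zero, -Prod.mk_one_one] <;> ring
  obtain ⟨h10, h11⟩ := hγ₁
  obtain ⟨h20, h21⟩ := hγ₂
  have e1 : ((Real.sqrt (1-γ₁) : ℝ):ℂ)^2 = ((1-γ₁:ℝ):ℂ) := by
    rw [← Complex.ofReal_pow, Real.sq_sqrt (by linarith)]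
  have e2 : ((Real.sqrt γ₁ : ℝ):ℂ)^2 = ((γ₁:ℝ):ℂ) := by
    rw [← Complex.ofReal_pow, Real.sq_sqrt (by linarith)]
  have e3 : ((Real.sqrt (1-γ₂) : ℝ):ℂ)^2 = ((1-γ₂:ℝ):ℂ) := by
    rw [← Complex.ofReal_pow, Real.sq_sqrt (by linarith)]
  have e4 : ((Real.sqrt γ₂ : ℝ):ℂ)^2 = ((γ₂:ℝ):ℂ) := by
    rw [← Complex.ofReal_pow, Real.sq_sqrt (by linarith)]
  have e6 : (((Real.sqrt 2 : ℝ):ℂ))⁻¹^2 = (2:ℂ)⁻¹ := by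
    rw [inv_pow, ← Complex.ofReal_pow, Real.sq_sqrt (by norm_num)]; norm_num
  simp only [psi2, sandwich, Fin.sum_univ_two, key]
  simp +decide only [vmv_smul, vmv_zero, vmv_zero', star_smul, star_zero, if_true, if_false,
    smul_smul, add_zero, zero_add, smul_zero, zero_smul, mul_zero, zero_mul,
    Complex.star_def, _root_.map_mul, map_inv₀, Complex.conj_ofReal]
  have p0 : vecMulVec wVec (star wVec) = psi2 := rfl
  have p1 : vecMulVec (ket4 0 0 0 0) (star (ket4 0 0 0 0)) = proj4 0 0 0 0 := rfl
  have p2 : vecMulVec (ket4 0 0 0 1) (star (ket4 0 0 0 1)) = proj4 0 0 0 1 := rfl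
  have p3 : vecMulVec (ket4 0 0 1 0) (star (ket4 0 0 1 0)) = proj4 0 0 1 0 := rfl
  have p4 : vecMulVec (ket4 0 1 0 0) (star (ket4 0 1 0 0)) = proj4 0 1 0 0 := rfl
  have p5 : vecMulVec (ket4 1 0 0 0) (star (ket4 1 0 0 0)) = proj4 1 0 0 0 := rfl
  rw [p0, p1, p2, p3, p4, p5]
  match_scalars <;> (ring_nf; simp only [e1, e2, e3, e4, e6]; push_cast; ring)
end

section
/- Fix an integer k ≥ 1 and γ₁, γ₂ ∈ [0,1]. For i = 1,…,k let |e_i⟩ ∈ (ℂ²)^{⊗k} be the computational basis vector whose i-th bit is 1 and all other bits are 0, and let ψ_k = |w_k⟩⟨w_k| with |w_k⟩ = (1/√k)∑_{i=1}^k |e_i⟩ ⊗ |e_i⟩, a state on 2k qubits (the first k qubits are receiver 1's rails, the last k are receiver 2's rails). Let ρ be the output of applying the amplitude damping channel A_{γ₁} independently to each of the first k qubits and A_{γ₂} independently to each of the last k qubits of ψ_k, and let P_k = ∑_{i=1}^k |e_i⟩⟨e_i| be the projection onto the one-particle sector of k qubits. Then (P_k ⊗ P_k) ρ (P_k ⊗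 P_k) = (1-γ₁)(1-γ₂)·ψ_k; in particular, post-selecting both receivers on the one-particle sector succeeds with probability (1-γ₁)(1-γ₂) and yields an exact rank-k maximally entangled state. -/
open Matrix Kronecker

/-- The `k`-fold tensor product of amplitude damping Kraus operators, one per qubit,
selected by `c : Fin k → Fin 2`. -/
noncomputable def adKrausTensor (γ : ℝ) (k : ℕ) (c : Fin k → Fin 2) :
    Matrix (Fin k → Fin 2) (Fin k → Fin 2) ℂ :=
  Matrix.of fun s t => ∏ j : Fin k, adKraus γ (c j) (s j) (t j)

/-- The one-particle basis vector `|e_i⟩` of `k` qubits: bit `i` is `1`, all others `0`. -/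
noncomputable def oneHot (k : ℕ) (i : Fin k) : (Fin k → Fin 2) → ℂ :=
  fun s => if s = (fun j => if j = i then 1 else 0) then 1 else 0

/-- The multi-rail state `|w_k⟩ = (1/√k) ∑ᵢ |e_i⟩ ⊗ |e_i⟩`. -/
noncomputable def wMulti (k : ℕ) : (Fin k → Fin 2) × (Fin k → Fin 2) → ℂ :=
  fun x => ((Real.sqrt k : ℝ) : ℂ)⁻¹ * ∑ i : Fin k, oneHot k i x.1 * oneHot k i x.2

/-- `ψ_k = |w_k⟩⟨w_k|`. -/
noncomputable def psiMulti (k : ℕ) :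
    Matrix ((Fin k → Fin 2) × (Fin k → Fin 2)) ((Fin k → Fin 2) × (Fin k → Fin 2)) ℂ :=
  Matrix.vecMulVec (wMulti k) (star (wMulti k))

/-- The projection `P_k = ∑ᵢ |e_i⟩⟨e_i|` onto the one-particle sector of `k` qubits. -/
noncomputable def oneParticleProj (k : ℕ) : Matrix (Fin k → Fin 2) (Fin k → Fin 2) ℂ :=
  ∑ i : Fin k, Matrix.vecMulVec (oneHot k i) (star (oneHot k i))

-- auxiliary
def mrDelta (k : ℕ) (i : Fin k) : Fin k → Fin 2 := fun j => if j = i then 1 else 0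

lemma oneHot_def (k : ℕ) (i : Fin k) (s : Fin k → Fin 2) :
    oneHot k i s = if s = mrDelta k i then 1 else 0 := rfl

lemma mrDelta_inj (k : ℕ) : Function.Injective (mrDelta k) := by
  intro i j h
  by_contra hij
  have := congrFun h i
  simp [mrDelta, hij] at this

lemma star_oneHot (k : ℕ) (i : Fin k) : star (oneHot k i) = oneHot k i := by
  funext s
  simp [oneHot, apply_ite (star : ℂ → ℂ)]

lemma K_mulVec (γ : ℝ) (k : ℕ) (c : Fin k → Fin 2) (i : Fin k) :
    adKrausTensor γ k c *ᵥ oneHot k i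
      = fun s => ∏ j : Fin k, adKraus γ (c j) (s j) (mrDelta k i j) := by
  funext s
  simp only [mulVec, dotProduct, adKrausTensor, Matrix.of_apply, oneHot_def,
    mul_ite, mul_one, mul_zero]
  rw [Finset.sum_ite_eq' Finset.univ (mrDelta k i)]
  simp

lemma adKraus00 (γ : ℝ) (a : Fin 2) : adKraus γ a 0 0 = if a = 0 then 1 else 0 := by
  fin_cases a <;> simp [adKraus]

lemma adKraus10 (γ : ℝ) (a : Fin 2) : adKraus γ a 1 0 = 0 := by
  fin_cases a <;> simp [adKraus]

lemma adKraus11 (γ : ℝ) (a : Fin 2) :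
    adKraus γ a 1 1 = if a = 0 then ((Real.sqrt (1 - γ) : ℝ) : ℂ) else 0 := by
  fin_cases a <;> simp [adKraus]

lemma K_val (γ : ℝ) (k : ℕ) (c : Fin k → Fin 2) (i j : Fin k) :
    (∏ l : Fin k, adKraus γ (c l) (mrDelta k j l) (mrDelta k i l))
      = if j = i ∧ c = 0 then ((Real.sqrt (1 - γ) : ℝ) : ℂ) else 0 := by
  by_cases hji : j = i
  · subst hji
    by_cases hc : c = 0
    · subst hc
      rw [Finset.prod_eq_single j]
      · simp [mrDelta, adKraus11]
      · intro l _ hl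
        simp [mrDelta, hl, adKraus00]
      · simp
    · obtain ⟨l, hl⟩ : ∃ l, c l ≠ 0 := by
        by_contra h
        push_neg at h
        exact hc (funext fun l => h l)
      rw [if_neg (by simp [hc])]
      apply Finset.prod_eq_zero (Finset.mem_univ l)
      by_cases hlj : l = j
      · subst hlj
        simp [mrDelta, adKraus11, hl]
      · simp [mrDelta, hlj, adKraus00, hl]
  · simp only [hji, false_and, if_false]
    apply Finset.prod_eq_zero (Finset.mem_univ j)
    simp [mrDelta, hji, adKraus10]

lemma PK_mulVec (γ : ℝ) (k : ℕ) (c : Fin k → Fin 2) (i : Fin k) :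
    oneParticleProj k *ᵥ (adKrausTensor γ k c *ᵥ oneHot k i)
      = (if c = 0 then ((Real.sqrt (1 - γ) : ℝ) : ℂ) else 0) • oneHot k i := by
  rw [K_mulVec]
  funext s
  simp only [oneParticleProj, mulVec, dotProduct, Finset.sum_apply, Matrix.sum_apply,
    vecMulVec_apply, star_oneHot, Pi.smul_apply, smul_eq_mul]
  calc (∑ t : Fin k → Fin 2, (∑ j : Fin k, oneHot k j s * oneHot k j t) *
          ∏ l : Fin k, adKraus γ (c l) (t l) (mrDelta k i l))
      = ∑ j : Fin k, ∑ t : Fin k → Fin 2, oneHot k j s * (oneHot k j t *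
          ∏ l : Fin k, adKraus γ (c l) (t l) (mrDelta k i l)) := by
        simp only [Finset.sum_mul, mul_assoc]
        exact Finset.sum_comm
    _ = ∑ j : Fin k, oneHot k j s * ∏ l : Fin k, adKraus γ (c l) (mrDelta k j l) (mrDelta k i l) := by
        refine Finset.sum_congr rfl fun j _ => ?_
        rw [← Finset.mul_sum]
        congr 1
        simp only [oneHot_def, ite_mul, one_mul, zero_mul]
        rw [Finset.sum_ite_eq' Finset.univ (mrDelta k j)]
        simp
    _ = ∑ j : Fin k, oneHot k j s * (if j = i ∧ c = 0 then ((Real.sqrt (1 - γ) : ℝ) : ℂ) else 0) := by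
        simp only [K_val]
    _ = (if c = 0 then ((Real.sqrt (1 - γ) : ℝ) : ℂ) else 0) * oneHot k i s := by
        by_cases hc : c = 0
        · simp only [hc, and_true, if_pos rfl, mul_ite, mul_zero]
          rw [Finset.sum_ite_eq' Finset.univ i]
          simp [mul_comm]
        · simp [hc]

lemma kron_mulVec {m n : Type*} [Fintype m] [Fintype n]
    (A : Matrix m m ℂ) (B : Matrix n n ℂ) (u : m → ℂ) (v : n → ℂ) :
    (A ⊗ₖ B) *ᵥ (fun p => u p.1 * v p.2) = fun p => (A *ᵥ u) p.1 * (B *ᵥ v) p.2 := by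
  funext p
  simp only [mulVec, dotProduct, kroneckerMap_apply, Fintype.sum_prod_type]
  rw [Finset.sum_mul_sum]
  refine Finset.sum_congr rfl fun x _ => Finset.sum_congr rfl fun y _ => ?_
  ring

lemma w_eq (k : ℕ) : wMulti k
    = ((Real.sqrt k : ℝ) : ℂ)⁻¹ • ∑ i : Fin k, (fun p : (Fin k → Fin 2) × (Fin k → Fin 2) =>
        oneHot k i p.1 * oneHot k i p.2) := by
  funext p
  simp [wMulti, Finset.sum_apply]

lemma main_vec (γ₁ γ₂ : ℝ) (k : ℕ) (c₁ c₂ : Fin k → Fin 2) :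
    (oneParticleProj k ⊗ₖ oneParticleProj k) *ᵥ
        ((adKrausTensor γ₁ k c₁ ⊗ₖ adKrausTensor γ₂ k c₂) *ᵥ wMulti k)
      = ((if c₁ = 0 then ((Real.sqrt (1 - γ₁) : ℝ) : ℂ) else 0) *
          (if c₂ = 0 then ((Real.sqrt (1 - γ₂) : ℝ) : ℂ) else 0)) • wMulti k := by
  rw [w_eq k]
  simp only [Matrix.mulVec_smul, Finset.smul_sum]
  rw [← Matrix.mulVecLin_apply, ← Matrix.mulVecLin_apply, map_sum, map_sum]
  simp only [Matrix.mulVecLin_apply]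
  refine Finset.sum_congr rfl fun i _ => ?_
  rw [Matrix.mulVec_smul, Matrix.mulVec_smul, kron_mulVec, kron_mulVec]
  have h1 := PK_mulVec γ₁ k c₁ i
  have h2 := PK_mulVec γ₂ k c₂ i
  funext p
  simp only [h1, h2, Pi.smul_apply, smul_eq_mul]
  ring

lemma conj_vecMulVec {m : Type*} [Fintype m] (A : Matrix m m ℂ) (u : m → ℂ) :
    A * Matrix.vecMulVec u (star u) * Aᴴ
      = Matrix.vecMulVec (A *ᵥ u) (star (A *ᵥ u)) := by
  ext p q
  simp only [mul_apply, vecMulVec_apply, mulVec, dotProduct, conjTranspose_apply,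
    Pi.star_apply, star_sum, star_mul']
  rw [Finset.sum_mul_sum]
  simp only [Finset.sum_mul, Finset.mul_sum]
  rw [Finset.sum_comm]
  refine Finset.sum_congr rfl fun y _ => Finset.sum_congr rfl fun x _ => ?_
  ring

lemma P_herm (k : ℕ) : (oneParticleProj k)ᴴ = oneParticleProj k := by
  ext p q
  simp only [oneParticleProj, conjTranspose_apply, Matrix.sum_apply, vecMulVec_apply,
    star_oneHot, Pi.star_apply, star_sum, star_mul']
  refine Finset.sum_congr rfl fun i _ => ?_
  simp [oneHot, apply_ite (star : ℂ → ℂ), mul_comm]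

lemma kron_conjT {m n : Type*} [Fintype m] [Fintype n]
    (A : Matrix m m ℂ) (B : Matrix n n ℂ) : (A ⊗ₖ B)ᴴ = Aᴴ ⊗ₖ Bᴴ := by
  ext p q
  simp only [conjTranspose_apply, kroneckerMap_apply, star_mul']

lemma star_w (k : ℕ) : star (wMulti k) = wMulti k := by
  funext p
  simp only [Pi.star_apply, Complex.star_def, wMulti, oneHot, _root_.map_mul, map_sum,
    map_inv₀, Complex.conj_ofReal, apply_ite (starRingEnd ℂ), _root_.map_one, map_zero]

lemma dot_oneHot (k : ℕ) (i j : Fin k) :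
    ∑ x : Fin k → Fin 2, oneHot k i x * oneHot k j x = if i = j then 1 else 0 := by
  simp only [oneHot_def, ite_mul, one_mul, zero_mul]
  rw [Finset.sum_ite_eq' Finset.univ (mrDelta k i)]
  simp [(mrDelta_inj k).eq_iff]

lemma trace_psi (k : ℕ) (hk : 1 ≤ k) : (psiMulti k).trace = 1 := by
  have hw := star_w k
  simp only [psiMulti, Matrix.trace, Matrix.diag_apply, vecMulVec_apply, hw]
  have key : ∀ p : (Fin k → Fin 2) × (Fin k → Fin 2), wMulti k p * wMulti k p
      = (((Real.sqrt k : ℝ) : ℂ)⁻¹ * ((Real.sqrt k : ℝ) : ℂ)⁻¹) *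
        ∑ i : Fin k, ∑ j : Fin k,
          (oneHot k i p.1 * oneHot k i p.2) * (oneHot k j p.1 * oneHot k j p.2) := by
    intro p
    simp only [wMulti]
    rw [mul_mul_mul_comm, Finset.sum_mul_sum]
  simp only [key]
  rw [← Finset.mul_sum]
  have hsum : ∑ p : (Fin k → Fin 2) × (Fin k → Fin 2), ∑ i : Fin k, ∑ j : Fin k,
      (oneHot k i p.1 * oneHot k i p.2) * (oneHot k j p.1 * oneHot k j p.2) = (k : ℂ) := by
    rw [Finset.sum_comm]
    have : ∀ i : Fin k, ∑ p : (Fin k → Fin 2) × (Fin k → Fin 2), ∑ j : Fin k,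
        (oneHot k i p.1 * oneHot k i p.2) * (oneHot k j p.1 * oneHot k j p.2)
        = ∑ j : Fin k, (if i = j then (1:ℂ) else 0) * (if i = j then 1 else 0) := by
      intro i
      rw [Finset.sum_comm]
      refine Finset.sum_congr rfl fun j _ => ?_
      rw [← dot_oneHot k i j, Finset.sum_mul_sum, Fintype.sum_prod_type]
      refine Finset.sum_congr rfl fun x _ => Finset.sum_congr rfl fun y _ => ?_
      ring
    simp only [this]
    simp [Finset.sum_ite_eq]
  rw [hsum]
  have hk0 : (0:ℝ) < k := by exact_mod_cast hk
  have h1 : ((Real.sqrt k : ℝ) : ℂ) * ((Real.sqrt k : ℝ) : ℂ) = (k : ℂ) := by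
    rw [← Complex.ofReal_mul, Real.mul_self_sqrt hk0.le]
    simp
  have h2 : ((Real.sqrt k : ℝ) : ℂ) ≠ 0 := by
    simpa using (Real.sqrt_pos.mpr hk0).ne'
  field_simp
  exact h1.symm.trans (sq _).symm

lemma smul_psi (k : ℕ) (a : ℂ) :
    Matrix.vecMulVec (a • wMulti k) (star (a • wMulti k)) = (a * star a) • psiMulti k := by
  ext p q
  simp only [vecMulVec_apply, psiMulti, Pi.smul_apply, smul_eq_mul, Pi.star_apply, star_mul',
    Matrix.smul_apply]
  ring

lemma sum_alpha (γ : ℝ) (hγ : γ ≤ 1) (k : ℕ) :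
    ∑ c : Fin k → Fin 2, (if c = 0 then ((Real.sqrt (1 - γ) : ℝ) : ℂ) else 0) *
        (if c = 0 then ((Real.sqrt (1 - γ) : ℝ) : ℂ) else 0) = (((1 - γ : ℝ)) : ℂ) := by
  simp only [ite_mul, zero_mul, mul_ite, mul_zero]
  rw [Finset.sum_ite_eq' Finset.univ (0 : Fin k → Fin 2)]
  simp [← Complex.ofReal_mul, Real.mul_self_sqrt (sub_nonneg.mpr hγ)]

/-- Multi-rail encoding: post-selecting both receivers of the damped multi-rail state on the
one-particle sector succeeds with probability `(1-γ₁)(1-γ₂)` and yields an exact rank-`k`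
maximally entangled state. -/
theorem multiRail_postselect {k : ℕ} (hk : 1 ≤ k) (γ₁ γ₂ : ℝ)
    (hγ₁ : γ₁ ∈ Set.Icc (0 : ℝ) 1) (hγ₂ : γ₂ ∈ Set.Icc (0 : ℝ) 1)
    (ρ : Matrix ((Fin k → Fin 2) × (Fin k → Fin 2)) ((Fin k → Fin 2) × (Fin k → Fin 2)) ℂ)
    (hρ : ρ = ∑ c₁ : Fin k → Fin 2, ∑ c₂ : Fin k → Fin 2,
        (adKrausTensor γ₁ k c₁ ⊗ₖ adKrausTensor γ₂ k c₂) * psiMulti k *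
          (adKrausTensor γ₁ k c₁ ⊗ₖ adKrausTensor γ₂ k c₂)ᴴ) :
    (oneParticleProj k ⊗ₖ oneParticleProj k) * ρ * (oneParticleProj k ⊗ₖ oneParticleProj k)
        = (((1 - γ₁) * (1 - γ₂) : ℝ) : ℂ) • psiMulti k ∧
      ((oneParticleProj k ⊗ₖ oneParticleProj k) * ρ *
          (oneParticleProj k ⊗ₖ oneParticleProj k)).trace
        = (((1 - γ₁) * (1 - γ₂) : ℝ) : ℂ) := by
  subst hρ
  have hP2 : (oneParticleProj k ⊗ₖ oneParticleProj k)ᴴ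
      = oneParticleProj k ⊗ₖ oneParticleProj k := by
    rw [kron_conjT, P_herm]
  have hstar : ∀ (γ : ℝ) (c : Fin k → Fin 2),
      star (if c = 0 then ((Real.sqrt (1 - γ) : ℝ) : ℂ) else 0)
        = (if c = 0 then ((Real.sqrt (1 - γ) : ℝ) : ℂ) else 0) := by
    intro γ c
    split <;> simp [Complex.star_def, Complex.conj_ofReal]
  have main : (oneParticleProj k ⊗ₖ oneParticleProj k) *
      (∑ c₁ : Fin k → Fin 2, ∑ c₂ : Fin k → Fin 2,
        (adKrausTensor γ₁ k c₁ ⊗ₖ adKrausTensor γ₂ k c₂) * psiMulti k *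
          (adKrausTensor γ₁ k c₁ ⊗ₖ adKrausTensor γ₂ k c₂)ᴴ) *
      (oneParticleProj k ⊗ₖ oneParticleProj k)
      = (((1 - γ₁) * (1 - γ₂) : ℝ) : ℂ) • psiMulti k := by
    simp only [Finset.mul_sum, Finset.sum_mul]
    have term : ∀ c₁ c₂ : Fin k → Fin 2,
        (oneParticleProj k ⊗ₖ oneParticleProj k) *
          ((adKrausTensor γ₁ k c₁ ⊗ₖ adKrausTensor γ₂ k c₂) * psiMulti k *
            (adKrausTensor γ₁ k c₁ ⊗ₖ adKrausTensor γ₂ k c₂)ᴴ) *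
          (oneParticleProj k ⊗ₖ oneParticleProj k)
        = (((if c₁ = 0 then ((Real.sqrt (1 - γ₁) : ℝ) : ℂ) else 0) *
            (if c₂ = 0 then ((Real.sqrt (1 - γ₂) : ℝ) : ℂ) else 0)) *
           ((if c₁ = 0 then ((Real.sqrt (1 - γ₁) : ℝ) : ℂ) else 0) *
            (if c₂ = 0 then ((Real.sqrt (1 - γ₂) : ℝ) : ℂ) else 0))) • psiMulti k := by
      intro c₁ c₂
      have hassoc : (oneParticleProj k ⊗ₖ oneParticleProj k) *
          ((adKrausTensor γ₁ k c₁ ⊗ₖ adKrausTensor γ₂ k c₂) * psiMulti k *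
            (adKrausTensor γ₁ k c₁ ⊗ₖ adKrausTensor γ₂ k c₂)ᴴ) *
          (oneParticleProj k ⊗ₖ oneParticleProj k)
          = ((oneParticleProj k ⊗ₖ oneParticleProj k) *
              (adKrausTensor γ₁ k c₁ ⊗ₖ adKrausTensor γ₂ k c₂)) * psiMulti k *
            ((oneParticleProj k ⊗ₖ oneParticleProj k) *
              (adKrausTensor γ₁ k c₁ ⊗ₖ adKrausTensor γ₂ k c₂))ᴴ := by
        rw [Matrix.conjTranspose_mul, hP2]
        simp only [Matrix.mul_assoc]
      rw [hassoc, psiMulti, conj_vecMulVec, ← Matrix.mulVec_mulVec, main_vec, smul_psi]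
      rw [star_mul', hstar γ₁ c₁, hstar γ₂ c₂, psiMulti]
    simp only [term, ← Finset.smul_sum, ← Finset.sum_smul]
    congr 1
    have : ∀ c₁ c₂ : Fin k → Fin 2,
        (((if c₁ = 0 then ((Real.sqrt (1 - γ₁) : ℝ) : ℂ) else 0) *
            (if c₂ = 0 then ((Real.sqrt (1 - γ₂) : ℝ) : ℂ) else 0)) *
           ((if c₁ = 0 then ((Real.sqrt (1 - γ₁) : ℝ) : ℂ) else 0) *
            (if c₂ = 0 then ((Real.sqrt (1 - γ₂) : ℝ) : ℂ) else 0)))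
        = ((if c₁ = 0 then ((Real.sqrt (1 - γ₁) : ℝ) : ℂ) else 0) *
            (if c₁ = 0 then ((Real.sqrt (1 - γ₁) : ℝ) : ℂ) else 0)) *
          ((if c₂ = 0 then ((Real.sqrt (1 - γ₂) : ℝ) : ℂ) else 0) *
            (if c₂ = 0 then ((Real.sqrt (1 - γ₂) : ℝ) : ℂ) else 0)) := by
      intro c₁ c₂; ring
    simp only [this]
    rw [← Finset.sum_mul_sum, sum_alpha γ₁ hγ₁.2 k, sum_alpha γ₂ hγ₂.2 k]
    rw [← Complex.ofReal_mul]
  refine ⟨main, ?_⟩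
  rw [main, Matrix.trace_smul, trace_psi k hk]
  simp
end
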